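/- Let k and l be positive integers with k ≢ l (mod 3). If ψ : ℝ → ℂ is three times continuously differentiable and satisfies ψ'''(x) + ψ'(x) + i·λ·ψ(x) = 0 for every x ∈ [0,L], together with the boundary conditions ψ(0) = ψ(L) = 0 and ψ'(0) = ψ'(L), then there exists c ∈ ℂ such that ψ(x) = c·φ(x) for all x ∈ [0,L]. -/

import Mathlib

/-!
Write `ψ''' + ψ' + iλψ` as `(D - r₀)(D - r₁)(D - r₂)ψ` with the distinct roots
`rⱼ = i√3 pⱼ / (3√n)`, `p = (2k + l, l - k, -(k + 2l))`. Peeling off one first-order factor at a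
time shows that a solution with zero initial data vanishes, so, after solving a Vandermonde system
for the initial data, every solution on `[0, L]` is `∑ cⱼ exp (rⱼ x)`. Since `rⱼ L = 2πi pⱼ / 3`
and the `pⱼ` are congruent mod 3, all three exponentials take the same value
`E = exp (2πi (l - k) / 3)` at `L`, and `E ≠ 1` because `k ≢ l (mod 3)`. Hence `ψ'(L) = E ψ'(0)`,
so `ψ(0) = 0` and `ψ'(0) = ψ'(L)` force `∑ cⱼ = ∑ cⱼ rⱼ = 0`, i.e. `k c₀ = l c₂`, which makes
`ψ` a multiple of `φ`.
-/

noncomputable section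

/-- `n = k² + k·l + l²` as a real number. -/
def nR (k l : ℕ) : ℝ := ((k ^ 2 + k * l + l ^ 2 : ℕ) : ℝ)

/-- The critical length `L = 2π√(n/3)`. -/
def LL (k l : ℕ) : ℝ := 2 * Real.pi * Real.sqrt (nR k l / 3)

/-- `λ = (2k+l)(k−l)(2l+k)/(3√3 n^{3/2})`. -/
def lam (k l : ℕ) : ℝ :=
  ((2 * k + l : ℕ) : ℝ) * ((k : ℝ) - (l : ℝ)) * ((2 * l + k : ℕ) : ℝ) /
    (3 * Real.sqrt 3 * nR k l ^ ((3 : ℝ) / 2))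

/-- The Type 1 eigenfunction `φ`. -/
def phi (k l : ℕ) : ℝ → ℂ := fun x =>
  -Complex.exp (Complex.I *
      ((x * (Real.sqrt 3 * ((2 * k + l : ℕ) : ℝ)) / (3 * Real.sqrt (nR k l)) : ℝ) : ℂ))
  - ((k : ℂ) / (l : ℂ)) * Complex.exp (-(Complex.I *
      ((x * (Real.sqrt 3 * ((k + 2 * l : ℕ) : ℝ)) / (3 * Real.sqrt (nR k l)) : ℝ) : ℂ)))
  + (((k : ℂ) + (l : ℂ)) / (l : ℂ)) * Complex.exp (Complex.I *
      ((x * (Real.sqrt 3 * ((l : ℝ) - (k : ℝ))) / (3 * Real.sqrt (nR k l)) : ℝ) : ℂ))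

/-- The Type 2 eigenfunction `φ̃`. -/
def phiT (k l : ℕ) : ℝ → ℂ := fun x =>
  Complex.exp (Complex.I *
      ((x * (Real.sqrt 3 * ((2 * k + l : ℕ) : ℝ)) / (3 * Real.sqrt (nR k l)) : ℝ) : ℂ))
  - Complex.exp (-(Complex.I *
      ((x * (Real.sqrt 3 * ((k + 2 * l : ℕ) : ℝ)) / (3 * Real.sqrt (nR k l)) : ℝ) : ℂ)))

end

open Complex Set

theorem eq_zero_of_hasDerivAt_eq_mul {f f' : ℝ → ℂ} {c : ℂ} {a b : ℝ}
    (hf : ∀ x ∈ Icc a b, HasDerivAt f (f' x) x) (hode : ∀ x ∈ Icc a b, f' x = c * f x)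
    (ha : f a = 0) : ∀ x ∈ Icc a b, f x = 0 :=
  ODE_solution_unique (v := fun _ y => c • y) (g := fun _ => 0) (fun _ => lipschitzWith_smul c)
    (fun x hx => (hf x hx).continuousAt.continuousWithinAt)
    (fun x hx => (hode x (Ico_subset_Icc_self hx) ▸ hf x (Ico_subset_Icc_self hx)).hasDerivWithinAt)
    continuousOn_const (fun _ _ => by simpa using hasDerivWithinAt_const _ _ (0 : ℂ)) ha

theorem eq_zero_of_cubic_ode {f f₁ f₂ f₃ : ℝ → ℂ} {r₁ r₂ r₃ : ℂ} {a b : ℝ}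
    (hf : ∀ x ∈ Icc a b, HasDerivAt f (f₁ x) x) (hf₁ : ∀ x ∈ Icc a b, HasDerivAt f₁ (f₂ x) x)
    (hf₂ : ∀ x ∈ Icc a b, HasDerivAt f₂ (f₃ x) x)
    (hode : ∀ x ∈ Icc a b, f₃ x - (r₁ + r₂ + r₃) * f₂ x + (r₁ * r₂ + r₁ * r₃ + r₂ * r₃) * f₁ x
      - r₁ * r₂ * r₃ * f x = 0)
    (h₀ : f a = 0) (h₁ : f₁ a = 0) (h₂ : f₂ a = 0) : ∀ x ∈ Icc a b, f x = 0 := by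
  have hu : ∀ x ∈ Icc a b, f₂ x - (r₂ + r₃) * f₁ x + r₂ * r₃ * f x = 0 :=
    eq_zero_of_hasDerivAt_eq_mul (c := r₁)
      (fun x hx => ((hf₂ x hx).sub ((hf₁ x hx).const_mul _)).add ((hf x hx).const_mul _))
      (fun x hx => by linear_combination hode x hx) (by simp [h₀, h₁, h₂])
  have hw : ∀ x ∈ Icc a b, f₁ x - r₃ * f x = 0 :=
    eq_zero_of_hasDerivAt_eq_mul (c := r₂) (fun x hx => (hf₁ x hx).sub ((hf x hx).const_mul _))
      (fun x hx => by linear_combination hu x hx) (by simp [h₀, h₁])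
  exact eq_zero_of_hasDerivAt_eq_mul hf (fun x hx => by linear_combination hw x hx) h₀

noncomputable def expSum {ι : Type*} [Fintype ι] (c r : ι → ℂ) (x : ℝ) : ℂ :=
  ∑ j, c j * cexp (r j * x)

section expSum
variable {ι : Type*} [Fintype ι] (c r : ι → ℂ)

theorem hasDerivAt_expSum (x : ℝ) : HasDerivAt (expSum c r) (expSum (c * r) r x) x := by
  unfold expSum
  refine HasDerivAt.fun_sum fun j _ => ?_
  have := (((hasDerivAt_id x).ofReal_comp).const_mul (r j)).cexp.const_mul (c j)
  simpa [mul_comm, mul_assoc, mul_left_comm] using this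

theorem differentiable_expSum : Differentiable ℝ (expSum c r) :=
  fun x => (hasDerivAt_expSum c r x).differentiableAt

theorem deriv_expSum : deriv (expSum c r) = expSum (c * r) r :=
  funext fun x => (hasDerivAt_expSum c r x).deriv

theorem expSum_add_of_forall_cexp_eq {L : ℝ} {E : ℂ} (hE : ∀ j, cexp (r j * L) = E) (x : ℝ) :
    expSum c r (x + L) = E * expSum c r x := by
  simp only [expSum, Finset.mul_sum, ofReal_add, mul_add, Complex.exp_add, hE]
  exact Finset.sum_congr rfl fun j _ => by ring

theorem expSum_zero_eq_zero_of_cexp_eq {L : ℝ} {E : ℂ} (hE : ∀ j, cexp (r j * L) = E)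
    (hE₁ : E ≠ 1) (h : expSum c r 0 = expSum c r L) : expSum c r 0 = 0 := by
  rw [← zero_add L, expSum_add_of_forall_cexp_eq c r hE, eq_comm] at h
  exact (mul_left_eq_self₀.mp h).resolve_left hE₁

end expSum

theorem deriv_eq_of_eqOn_Icc {f g : ℝ → ℂ} {a b x : ℝ} (hab : a < b) (hx : x ∈ Icc a b)
    (hfg : EqOn f g (Icc a b)) (hf : DifferentiableAt ℝ f x) (hg : DifferentiableAt ℝ g x) :
    deriv f x = deriv g x :=
  (uniqueDiffOn_Icc hab x hx).eq_deriv _ hf.hasDerivAt.hasDerivWithinAt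
    (hg.hasDerivAt.hasDerivWithinAt.congr_of_mem (fun _ hy => hfg hy) hx)

theorem exists_sum_mul_pow_eq {K : Type*} [Field K] {n : ℕ} {r : Fin n → K}
    (hr : Function.Injective r) (d : Fin n → K) :
    ∃ c : Fin n → K, ∀ m : Fin n, ∑ j, c j * r j ^ (m : ℕ) = d m := by
  obtain ⟨c, hc⟩ := Matrix.vecMul_surjective_iff_isUnit.mpr
    ((Matrix.isUnit_iff_isUnit_det _).mpr (Matrix.det_vandermonde_ne_zero_iff.mpr hr).isUnit) d
  exact ⟨c, congrFun hc⟩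

theorem exists_eqOn_expSum_of_cubic_ode {ψ : ℝ → ℂ} {r : Fin 3 → ℂ} {L : ℝ}
    (hr : Function.Injective r) (hψ : Differentiable ℝ ψ)
    (hψ' : Differentiable ℝ (deriv ψ)) (hψ'' : Differentiable ℝ (deriv (deriv ψ)))
    (hode : ∀ x ∈ Icc 0 L, deriv (deriv (deriv ψ)) x - (r 0 + r 1 + r 2) * deriv (deriv ψ) x
      + (r 0 * r 1 + r 0 * r 2 + r 1 * r 2) * deriv ψ x - r 0 * r 1 * r 2 * ψ x = 0) :
    ∃ c : Fin 3 → ℂ, EqOn ψ (expSum c r) (Icc 0 L) := by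
  obtain ⟨c, hc⟩ := exists_sum_mul_pow_eq hr ![ψ 0, deriv ψ 0, deriv (deriv ψ) 0]
  have hc₀ := hc 0
  have hc₁ := hc 1
  have hc₂ := hc 2
  simp only [Fin.sum_univ_three, Fin.coe_ofNat_eq_mod, Nat.zero_mod, Nat.one_mod, Nat.mod_succ,
    pow_zero, pow_one, mul_one, Matrix.cons_val_zero, Matrix.cons_val_one, Matrix.cons_val]
    at hc₀ hc₁ hc₂
  refine ⟨c, fun x hx => sub_eq_zero.mp <|
    eq_zero_of_cubic_ode (r₁ := r 0) (r₂ := r 1) (r₃ := r 2)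
      (f := fun x => ψ x - expSum c r x) (f₁ := fun x => deriv ψ x - expSum (c * r) r x)
      (f₂ := fun x => deriv (deriv ψ) x - expSum (c * r * r) r x)
      (fun x _ => (hψ x).hasDerivAt.sub (hasDerivAt_expSum c r x))
      (fun x _ => (hψ' x).hasDerivAt.sub (hasDerivAt_expSum (c * r) r x))
      (fun x _ => (hψ'' x).hasDerivAt.sub (hasDerivAt_expSum (c * r * r) r x))
      (fun x hx => ?_) ?_ ?_ ?_ x hx⟩
  · simp only [expSum, Fin.sum_univ_three, Pi.mul_apply]
    linear_combination hode x hx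
  all_goals
    simp only [expSum, Fin.sum_univ_three, Pi.mul_apply, ofReal_zero, mul_zero, Complex.exp_zero,
      mul_one]
  · linear_combination -hc₀
  · linear_combination -hc₁
  · linear_combination -hc₂

section

open Real

variable {k l : ℕ}

theorem nR_pos (hk : 0 < k) : 0 < nR k l := by
  unfold nR; positivity

theorem nR_eq : nR k l = (k : ℝ) ^ 2 + k * l + l ^ 2 := by
  unfold nR; push_cast; ring

def freqNum (k l : ℕ) : Fin 3 → ℤ := ![2 * k + l, l - k, -(k + 2 * l)]

noncomputable def freqScale (k l : ℕ) : ℝ := √3 / (3 * √(nR k l))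

/-- The roots `i ωⱼ` of `z³ + z + iλ`, where `ωⱼ = √3 pⱼ / (3√n)` are the frequencies of `phi`. -/
noncomputable def root (k l : ℕ) (j : Fin 3) : ℂ := I * freqScale k l * freqNum k l j

theorem freqScale_pos (hk : 0 < k) : 0 < freqScale k l := by
  have := nR_pos (l := l) hk
  unfold freqScale; positivity

theorem freqScale_sq_mul (hk : 0 < k) : freqScale k l ^ 2 * (3 * nR k l) = 1 := by
  have hn := nR_pos (l := l) hk
  unfold freqScale
  rw [div_pow, mul_pow, sq_sqrt (by norm_num), sq_sqrt hn.le]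
  field_simp

theorem freqScale_cube_mul (hk : 0 < k) :
    freqScale k l ^ 3 * ((2 * k + l) * (k - l) * (k + 2 * l)) = lam k l := by
  have hn := nR_pos (l := l) hk
  have h32 : nR k l ^ ((3 : ℝ) / 2) = nR k l * √(nR k l) := by
    rw [sqrt_eq_rpow, ← rpow_one_add' hn.le (by norm_num)]; norm_num
  unfold freqScale lam
  rw [h32]
  push_cast
  field_simp
  linear_combination
    ((k - l) * (k + 2 * l) * nR k l * (√3 ^ 2 + 3)) * sq_sqrt (show (0 : ℝ) ≤ 3 by norm_num)
      - 9 * (k - l) * (k + 2 * l) * sq_sqrt hn.le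

theorem root_sum : root k l 0 + root k l 1 + root k l 2 = 0 := by
  simp only [root, freqNum, Matrix.cons_val_zero, Matrix.cons_val_one, Matrix.cons_val]
  push_cast
  ring

theorem root_sum_mul (hk : 0 < k) :
    root k l 0 * root k l 1 + root k l 0 * root k l 2 + root k l 1 * root k l 2 = 1 := by
  have h : ((freqScale k l ^ 2 * (3 * nR k l) : ℝ) : ℂ) = 1 := by
    rw [freqScale_sq_mul hk]; simp
  simp only [root, freqNum, nR_eq] at h ⊢
  push_cast at h ⊢
  linear_combination h - (freqScale k l ^ 2 * 3 * (k ^ 2 + k * l + l ^ 2) : ℂ) * I_sq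

theorem root_prod (hk : 0 < k) : root k l 0 * root k l 1 * root k l 2 = -(I * lam k l) := by
  have h := congrArg ofReal (freqScale_cube_mul (l := l) hk)
  simp only [root, freqNum]
  push_cast at h ⊢
  linear_combination -I * h
    + (I * freqScale k l ^ 3 * ((2 * k + l) * (k - l) * (k + 2 * l)) : ℂ) * I_sq

theorem LL_pos (hk : 0 < k) : 0 < LL k l := by
  have := nR_pos (l := l) hk
  unfold LL; positivity

theorem freqScale_mul_LL (hk : 0 < k) : freqScale k l * LL k l = 2 * π / 3 := by
  have hn := nR_pos (l := l) hk
  unfold freqScale LL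
  rw [sqrt_div hn.le]
  field_simp

theorem root_injective (hk : 0 < k) (hl : 0 < l) : Function.Injective (root k l) := by
  have hF : (I * freqScale k l : ℂ) ≠ 0 :=
    mul_ne_zero I_ne_zero (by exact_mod_cast (freqScale_pos hk).ne')
  have hnum : Function.Injective (freqNum k l) := by
    intro i j h
    fin_cases i <;> fin_cases j <;>
      simp only [freqNum, Fin.reduceFinMk, Matrix.cons_val, Fin.reduceEq] at h ⊢ <;> omega
  intro i j h
  exact hnum (by exact_mod_cast mul_left_cancel₀ hF h)

theorem cexp_root_mul_LL (hk : 0 < k) (j : Fin 3) :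
    cexp (root k l j * LL k l) = cexp (2 * π * I * ((l - k : ℤ) : ℂ) / 3) := by
  have h : root k l j * LL k l = 2 * π * I * freqNum k l j / 3 := by
    have hFL := congrArg ofReal (freqScale_mul_LL (l := l) hk)
    push_cast at hFL
    rw [root]
    linear_combination (I * freqNum k l j) * hFL
  rw [h, exp_eq_exp_iff_exists_int]
  fin_cases j
  all_goals simp only [freqNum, Fin.reduceFinMk, Matrix.cons_val]
  · exact ⟨k, by push_cast; ring⟩
  · exact ⟨0, by push_cast; ring⟩
  · exact ⟨-l, by push_cast; ring⟩

theorem cexp_two_pi_I_mul_div_three_ne_one {m : ℤ} (hm : ¬ (3 : ℤ) ∣ m) :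
    cexp (2 * π * I * m / 3) ≠ 1 := by
  rw [Ne, Complex.exp_eq_one_iff]
  rintro ⟨n, hn⟩
  have : (m : ℂ) = (3 * n : ℤ) := by
    push_cast
    apply mul_left_cancel₀ two_pi_I_ne_zero
    linear_combination 3 * hn
  exact hm ⟨n, by exact_mod_cast this⟩

theorem phi_eq_expSum (x : ℝ) :
    phi k l x = expSum ![-1, (k + l) / l, -(k / l)] (root k l) x := by
  simp only [phi, expSum, Fin.sum_univ_three, root, freqNum, freqScale, Matrix.cons_val_zero,
    Matrix.cons_val_one, Matrix.cons_val]
  push_cast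
  ring_nf

theorem expSum_root_eq_neg_mul_phi (hk : 0 < k) (hl : 0 < l) {c : Fin 3 → ℂ}
    (h₀ : expSum c (root k l) 0 = 0) (h₁ : expSum (c * root k l) (root k l) 0 = 0) (x : ℝ) :
    expSum c (root k l) x = -c 0 * phi k l x := by
  have hF : (3 * I * freqScale k l : ℂ) ≠ 0 := by
    have := (freqScale_pos (l := l) hk).ne'
    simp [this]
  have hl' : (l : ℂ) ≠ 0 := by exact_mod_cast hl.ne'
  simp only [expSum, Fin.sum_univ_three, Pi.mul_apply, ofReal_zero, mul_zero, Complex.exp_zero,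
    mul_one] at h₀ h₁
  have hkl : (k : ℂ) * c 0 = l * c 2 := by
    apply mul_left_cancel₀ hF
    simp only [root, freqNum, Matrix.cons_val_zero, Matrix.cons_val_one, Matrix.cons_val] at h₁
    push_cast at h₁
    linear_combination h₁ - (I * freqScale k l * (l - k)) * h₀
  rw [phi_eq_expSum]
  simp only [expSum, Fin.sum_univ_three, Matrix.cons_val_zero, Matrix.cons_val_one, Matrix.cons_val]
  field_simp
  linear_combination (l * cexp (x * root k l 1)) * h₀
    + (cexp (x * root k l 1) - cexp (x * root k l 2)) * hkl

end

theorem stmt_6_general (k l : ℕ) (hk : 0 < k) (hl : 0 < l) (hmod : ¬ k ≡ l [MOD 3])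
    (ψ : ℝ → ℂ) (hψ : ContDiff ℝ 3 ψ)
    (hode : ∀ x ∈ Set.Icc (0 : ℝ) (LL k l),
      deriv (deriv (deriv ψ)) x + deriv ψ x + Complex.I * ((lam k l : ℝ) : ℂ) * ψ x = 0)
    (h0 : ψ 0 = 0)
    (hd : deriv ψ 0 = deriv ψ (LL k l)) :
    ∃ c : ℂ, ∀ x ∈ Set.Icc (0 : ℝ) (LL k l), ψ x = c * phi k l x := by
  have hL := LL_pos (l := l) hk
  have hψ₁ : Differentiable ℝ ψ := hψ.differentiable (by norm_num)
  have hψ₂ : Differentiable ℝ (deriv ψ) := (hψ.of_le (by norm_num)).differentiable_deriv_two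
  have hψ₃ : Differentiable ℝ (deriv (deriv ψ)) :=
    (hψ.iterate_deriv' 1 2).differentiable one_ne_zero
  obtain ⟨c, hc⟩ := exists_eqOn_expSum_of_cubic_ode (root_injective hk hl) hψ₁ hψ₂ hψ₃
    fun x hx => by
      rw [root_sum, root_sum_mul hk, root_prod hk]
      linear_combination hode x hx
  have hderiv : ∀ x ∈ Icc 0 (LL k l), deriv ψ x = expSum (c * root k l) (root k l) x :=
    fun x hx => by
      rw [deriv_eq_of_eqOn_Icc hL hx hc (hψ₁ x) (differentiable_expSum c _ x), deriv_expSum]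
  have hc₀ : expSum c (root k l) 0 = 0 := (hc ⟨le_rfl, hL.le⟩).symm.trans h0
  have hc₁ : expSum (c * root k l) (root k l) 0 = 0 :=
    expSum_zero_eq_zero_of_cexp_eq _ _ (cexp_root_mul_LL hk)
      (cexp_two_pi_I_mul_div_three_ne_one (mt Nat.modEq_iff_dvd.mpr hmod))
      (by rw [← hderiv 0 ⟨le_rfl, hL.le⟩, ← hderiv _ ⟨hL.le, le_rfl⟩, hd])
  exact ⟨-c 0, fun x hx => (hc hx).trans (expSum_root_eq_neg_mul_phi hk hl hc₀ hc₁ x)⟩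

theorem stmt_6 (k l : ℕ) (hk : 0 < k) (hl : 0 < l) (hmod : ¬ k ≡ l [MOD 3])
    (ψ : ℝ → ℂ) (hψ : ContDiff ℝ 3 ψ)
    (hode : ∀ x ∈ Set.Icc (0 : ℝ) (LL k l),
      deriv (deriv (deriv ψ)) x + deriv ψ x + Complex.I * ((lam k l : ℝ) : ℂ) * ψ x = 0)
    (h0 : ψ 0 = 0) (hLv : ψ (LL k l) = 0)
    (hd : deriv ψ 0 = deriv ψ (LL k l)) :
    ∃ c : ℂ, ∀ x ∈ Set.Icc (0 : ℝ) (LL k l), ψ x = c * phi k l x :=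
  stmt_6_general k l hk hl hmod ψ hψ hode h0 hd
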